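/- Preservation of acyclicity: if D is a finite derivation consisting only of logical rules of G3PDL∞ whose conclusion is an acyclic sequent, then every sequent appearing in D is acyclic. -/

import Mathlib

set_option maxHeartbeats 1000000

/-! ### Syntax of PDL -/

mutual
inductive PDLFormula : Type
  | bot : PDLFormula
  | atom : ℕ → PDLFormula
  | and : PDLFormula → PDLFormula → PDLFormula
  | or : PDLFormula → PDLFormula → PDLFormula
  | imp : PDLFormula → PDLFormula → PDLFormula
  | box : PDLProgram → PDLFormula → PDLFormula
  deriving DecidableEq

inductive PDLProgram : Type
  | atom : ℕ → PDLProgram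
  | comp : PDLProgram → PDLProgram → PDLProgram
  | choice : PDLProgram → PDLProgram → PDLProgram
  | test : PDLFormula → PDLProgram
  | star : PDLProgram → PDLProgram
  deriving DecidableEq
end

/-! ### Semantics of PDL -/

structure PDLModel where
  State : Type
  propI : ℕ → Set State
  progI : ℕ → Set (State × State)

mutual
def PDLFormula.sem (m : PDLModel) : PDLFormula → Set m.State
  | .bot => ∅
  | .atom p => m.propI p
  | .and φ ψ => PDLFormula.sem m φ ∩ PDLFormula.sem m ψ
  | .or φ ψ => PDLFormula.sem m φ ∪ PDLFormula.sem m ψ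
  | .imp φ ψ => (PDLFormula.sem m φ)ᶜ ∪ PDLFormula.sem m ψ
  | .box α φ => { s | ∀ t, (s, t) ∈ PDLProgram.sem m α → t ∈ PDLFormula.sem m φ }

def PDLProgram.sem (m : PDLModel) : PDLProgram → Set (m.State × m.State)
  | .atom a => m.progI a
  | .comp α β => { p | ∃ t, (p.1, t) ∈ PDLProgram.sem m α ∧ (t, p.2) ∈ PDLProgram.sem m β }
  | .choice α β => PDLProgram.sem m α ∪ PDLProgram.sem m β
  | .test φ => { p | p.1 = p.2 ∧ p.1 ∈ PDLFormula.sem m φ }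
  | .star α => { p | Relation.ReflTransGen (fun s t => (s, t) ∈ PDLProgram.sem m α) p.1 p.2 }
end

/-! ### Labelled sequents -/

abbrev Label := ℕ

inductive SeqElem : Type
  | rel : Label → ℕ → Label → SeqElem
  | lab : Label → PDLFormula → SeqElem
  deriving DecidableEq

structure Sequent where
  ant : Finset SeqElem
  suc : Finset SeqElem

def SeqElem.sat (m : PDLModel) (v : Label → m.State) : SeqElem → Prop
  | .rel x a y => (v x, v y) ∈ m.progI a
  | .lab x φ => v x ∈ PDLFormula.sem m φ

def Sequent.valid (S : Sequent) : Prop :=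
  ∀ (m : PDLModel) (v : Label → m.State),
    (∀ A ∈ S.ant, A.sat m v) → ∃ B ∈ S.suc, B.sat m v

def Sequent.falsifiedBy (S : Sequent) (m : PDLModel) (v : Label → m.State) : Prop :=
  (∀ A ∈ S.ant, A.sat m v) ∧ ∀ B ∈ S.suc, ¬ B.sat m v

/-! ### Labels, starred labels, reachability -/

def SeqElem.labels : SeqElem → Finset Label
  | .rel x _ y => {x, y}
  | .lab x _ => {x}

def labs (Γ : Finset SeqElem) : Finset Label := Γ.biUnion SeqElem.labels

def starred (Δ : Finset SeqElem) : Set Label :=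
  { x | ∃ α φ, SeqElem.lab x (PDLFormula.box (PDLProgram.star α) φ) ∈ Δ }

def relStep (Γ : Finset SeqElem) (x y : Label) : Prop := ∃ a, SeqElem.rel x a y ∈ Γ

/-- `x` reaches `y` through a (possibly empty) chain of relational atoms of `Γ`. -/
def reaches (Γ : Finset SeqElem) : Label → Label → Prop := Relation.ReflTransGen (relStep Γ)

/-- A set of relational atoms is acyclic when no label reaches itself via a nonempty chain. -/
def RelAcyclic (Γ : Finset SeqElem) : Prop := ∀ x, ¬ Relation.TransGen (relStep Γ) x x

def Sequent.Acyclic (S : Sequent) : Prop := RelAcyclic S.ant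

/-! ### Classification of formulas, normal sequents -/

def PDLFormula.isAtomic : PDLFormula → Prop
  | .bot => True
  | .atom _ => True
  | _ => False

def PDLFormula.isIterated : PDLFormula → Prop
  | .box (.star _) _ => True
  | _ => False

def SeqElem.isRel : SeqElem → Prop
  | .rel _ _ _ => True
  | _ => False

def NormalSeq (S : Sequent) : Prop :=
  (∀ A ∈ S.ant, A ∉ S.suc) ∧
  (∀ A ∈ S.suc, ∃ x φ, A = SeqElem.lab x φ ∧ (φ.isAtomic ∨ φ.isIterated)) ∧
  (∀ A ∈ S.ant, A.isRel ∨ ∃ x φ, A = SeqElem.lab x φ ∧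
      (φ.isAtomic ∨ ∃ a ψ, φ = PDLFormula.box (PDLProgram.atom a) ψ ∧
        ∀ y, SeqElem.rel x a y ∉ S.ant))

/-! ### Test-freeness and subformulas -/

mutual
def PDLFormula.TestFree : PDLFormula → Prop
  | .bot => True
  | .atom _ => True
  | .and φ ψ => PDLFormula.TestFree φ ∧ PDLFormula.TestFree ψ
  | .or φ ψ => PDLFormula.TestFree φ ∧ PDLFormula.TestFree ψ
  | .imp φ ψ => PDLFormula.TestFree φ ∧ PDLFormula.TestFree ψ
  | .box α φ => PDLProgram.TestFree α ∧ PDLFormula.TestFree φ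

def PDLProgram.TestFree : PDLProgram → Prop
  | .atom _ => True
  | .comp α β => PDLProgram.TestFree α ∧ PDLProgram.TestFree β
  | .choice α β => PDLProgram.TestFree α ∧ PDLProgram.TestFree β
  | .test _ => False
  | .star α => PDLProgram.TestFree α
end

def SeqElem.TestFree : SeqElem → Prop
  | .rel _ _ _ => True
  | .lab _ φ => φ.TestFree

def Sequent.TestFree (S : Sequent) : Prop :=
  (∀ A ∈ S.ant, A.TestFree) ∧ (∀ A ∈ S.suc, A.TestFree)

mutual
inductive Subf : PDLFormula → PDLFormula → Prop
  | refl (φ) : Subf φ φ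
  | andl {χ φ ψ} : Subf χ φ → Subf χ (PDLFormula.and φ ψ)
  | andr {χ φ ψ} : Subf χ ψ → Subf χ (PDLFormula.and φ ψ)
  | orl {χ φ ψ} : Subf χ φ → Subf χ (PDLFormula.or φ ψ)
  | orr {χ φ ψ} : Subf χ ψ → Subf χ (PDLFormula.or φ ψ)
  | impl {χ φ ψ} : Subf χ φ → Subf χ (PDLFormula.imp φ ψ)
  | impr {χ φ ψ} : Subf χ ψ → Subf χ (PDLFormula.imp φ ψ)
  | boxf {χ α φ} : Subf χ φ → Subf χ (PDLFormula.box α φ)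
  | boxp {χ α φ} : SubfP χ α → Subf χ (PDLFormula.box α φ)

inductive SubfP : PDLFormula → PDLProgram → Prop
  | compl {χ α β} : SubfP χ α → SubfP χ (PDLProgram.comp α β)
  | compr {χ α β} : SubfP χ β → SubfP χ (PDLProgram.comp α β)
  | choicel {χ α β} : SubfP χ α → SubfP χ (PDLProgram.choice α β)
  | choicer {χ α β} : SubfP χ β → SubfP χ (PDLProgram.choice α β)
  | test {χ φ} : Subf χ φ → SubfP χ (PDLProgram.test φ)
  | star {χ α} : SubfP χ α → SubfP χ (PDLProgram.star α)
end

/-! ### Label substitution -/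

def substLabel (x y z : Label) : Label := if z = x then y else z

def SeqElem.subst (x y : Label) : SeqElem → SeqElem
  | .rel z a w => .rel (substLabel x y z) a (substLabel x y w)
  | .lab z φ => .lab (substLabel x y z) φ
/-! ### Trace values -/

structure TraceValue where
  label : Label
  spine : List PDLProgram
  focus : PDLProgram
  formula : PDLFormula
  deriving DecidableEq

/-- The labelled formula `x : [α₁]…[αₙ][β*]φ` denoted by a trace value. -/
def TraceValue.toFormula (τ : TraceValue) : PDLFormula :=
  τ.spine.foldr PDLFormula.box (PDLFormula.box (PDLProgram.star τ.focus) τ.formula)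

def TraceValue.toElem (τ : TraceValue) : SeqElem := SeqElem.lab τ.label τ.toFormula

/-- `[γ]τ`: prepend a program to the spine of a trace value. -/
def TraceValue.push (γ : PDLProgram) (τ : TraceValue) : TraceValue :=
  ⟨τ.label, γ :: τ.spine, τ.focus, τ.formula⟩

/-! ### Rule applications of G3PDL -/

inductive RuleApp : Type
  | ax (A : SeqElem)
  | botL (x : Label)
  | wl (A : SeqElem) (Γ Δ : Finset SeqElem)
  | wr (A : SeqElem) (Γ Δ : Finset SeqElem)
  | andL (x : Label) (φ ψ : PDLFormula) (Γ Δ : Finset SeqElem)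
  | andR (x : Label) (φ ψ : PDLFormula) (Γ Δ : Finset SeqElem)
  | orL (x : Label) (φ ψ : PDLFormula) (Γ Δ : Finset SeqElem)
  | orR (x : Label) (φ ψ : PDLFormula) (Γ Δ : Finset SeqElem)
  | impL (x : Label) (φ ψ : PDLFormula) (Γ Δ : Finset SeqElem)
  | impR (x : Label) (φ ψ : PDLFormula) (Γ Δ : Finset SeqElem)
  | boxL (x : Label) (a : ℕ) (y : Label) (φ : PDLFormula) (Γ Δ : Finset SeqElem)
  | boxR (x : Label) (a : ℕ) (y : Label) (φ : PDLFormula) (Γ Δ : Finset SeqElem)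
  | compL (x : Label) (α β : PDLProgram) (φ : PDLFormula) (Γ Δ : Finset SeqElem)
  | compR (x : Label) (α β : PDLProgram) (φ : PDLFormula) (Γ Δ : Finset SeqElem)
  | choiceL (x : Label) (α β : PDLProgram) (φ : PDLFormula) (Γ Δ : Finset SeqElem)
  | choiceR (x : Label) (α β : PDLProgram) (φ : PDLFormula) (Γ Δ : Finset SeqElem)
  | testL (x : Label) (φ ψ : PDLFormula) (Γ Δ : Finset SeqElem)
  | testR (x : Label) (φ ψ : PDLFormula) (Γ Δ : Finset SeqElem)
  | starL (x : Label) (α : PDLProgram) (φ : PDLFormula) (Γ Δ : Finset SeqElem)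
  | starR (x : Label) (α : PDLProgram) (φ : PDLFormula) (Γ Δ : Finset SeqElem)
  | subst (x y : Label) (Γ Δ : Finset SeqElem)
  | cut (A : SeqElem) (Γ Δ Γ₂ Δ₂ : Finset SeqElem)
  deriving DecidableEq

namespace RuleApp

/-- Conclusion of a rule application. -/
def conc : RuleApp → Sequent
  | ax A => ⟨{A}, {A}⟩
  | botL x => ⟨{SeqElem.lab x PDLFormula.bot}, ∅⟩
  | wl A Γ Δ => ⟨insert A Γ, Δ⟩
  | wr A Γ Δ => ⟨Γ, insert A Δ⟩
  | andL x φ ψ Γ Δ => ⟨insert (SeqElem.lab x (PDLFormula.and φ ψ)) Γ, Δ⟩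
  | andR x φ ψ Γ Δ => ⟨Γ, insert (SeqElem.lab x (PDLFormula.and φ ψ)) Δ⟩
  | orL x φ ψ Γ Δ => ⟨insert (SeqElem.lab x (PDLFormula.or φ ψ)) Γ, Δ⟩
  | orR x φ ψ Γ Δ => ⟨Γ, insert (SeqElem.lab x (PDLFormula.or φ ψ)) Δ⟩
  | impL x φ ψ Γ Δ => ⟨insert (SeqElem.lab x (PDLFormula.imp φ ψ)) Γ, Δ⟩
  | impR x φ ψ Γ Δ => ⟨Γ, insert (SeqElem.lab x (PDLFormula.imp φ ψ)) Δ⟩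
  | boxL x a y φ Γ Δ =>
      ⟨insert (SeqElem.lab x (PDLFormula.box (PDLProgram.atom a) φ)) (insert (SeqElem.rel x a y) Γ), Δ⟩
  | boxR x a _ φ Γ Δ => ⟨Γ, insert (SeqElem.lab x (PDLFormula.box (PDLProgram.atom a) φ)) Δ⟩
  | compL x α β φ Γ Δ => ⟨insert (SeqElem.lab x (PDLFormula.box (PDLProgram.comp α β) φ)) Γ, Δ⟩
  | compR x α β φ Γ Δ => ⟨Γ, insert (SeqElem.lab x (PDLFormula.box (PDLProgram.comp α β) φ)) Δ⟩
  | choiceL x α β φ Γ Δ => ⟨insert (SeqElem.lab x (PDLFormula.box (PDLProgram.choice α β) φ)) Γ, Δ⟩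
  | choiceR x α β φ Γ Δ => ⟨Γ, insert (SeqElem.lab x (PDLFormula.box (PDLProgram.choice α β) φ)) Δ⟩
  | testL x φ ψ Γ Δ => ⟨insert (SeqElem.lab x (PDLFormula.box (PDLProgram.test φ) ψ)) Γ, Δ⟩
  | testR x φ ψ Γ Δ => ⟨Γ, insert (SeqElem.lab x (PDLFormula.box (PDLProgram.test φ) ψ)) Δ⟩
  | starL x α φ Γ Δ => ⟨insert (SeqElem.lab x (PDLFormula.box (PDLProgram.star α) φ)) Γ, Δ⟩
  | starR x α φ Γ Δ => ⟨Γ, insert (SeqElem.lab x (PDLFormula.box (PDLProgram.star α) φ)) Δ⟩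
  | subst x y Γ Δ => ⟨Γ.image (SeqElem.subst x y), Δ.image (SeqElem.subst x y)⟩
  | cut _ Γ Δ Γ₂ Δ₂ => ⟨Γ ∪ Γ₂, Δ ∪ Δ₂⟩

/-- Premises of a rule application. -/
def prems : RuleApp → List Sequent
  | ax _ => []
  | botL _ => []
  | wl _ Γ Δ => [⟨Γ, Δ⟩]
  | wr _ Γ Δ => [⟨Γ, Δ⟩]
  | andL x φ ψ Γ Δ => [⟨insert (SeqElem.lab x φ) (insert (SeqElem.lab x ψ) Γ), Δ⟩]
  | andR x φ ψ Γ Δ => [⟨Γ, insert (SeqElem.lab x φ) Δ⟩, ⟨Γ, insert (SeqElem.lab x ψ) Δ⟩]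
  | orL x φ ψ Γ Δ => [⟨insert (SeqElem.lab x φ) Γ, Δ⟩, ⟨insert (SeqElem.lab x ψ) Γ, Δ⟩]
  | orR x φ ψ Γ Δ => [⟨Γ, insert (SeqElem.lab x φ) (insert (SeqElem.lab x ψ) Δ)⟩]
  | impL x φ ψ Γ Δ => [⟨Γ, insert (SeqElem.lab x φ) Δ⟩, ⟨insert (SeqElem.lab x ψ) Γ, Δ⟩]
  | impR x φ ψ Γ Δ => [⟨insert (SeqElem.lab x φ) Γ, insert (SeqElem.lab x ψ) Δ⟩]
  | boxL _ _ y φ Γ Δ => [⟨insert (SeqElem.lab y φ) Γ, Δ⟩]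
  | boxR x a y φ Γ Δ => [⟨insert (SeqElem.rel x a y) Γ, insert (SeqElem.lab y φ) Δ⟩]
  | compL x α β φ Γ Δ => [⟨insert (SeqElem.lab x (PDLFormula.box α (PDLFormula.box β φ))) Γ, Δ⟩]
  | compR x α β φ Γ Δ => [⟨Γ, insert (SeqElem.lab x (PDLFormula.box α (PDLFormula.box β φ))) Δ⟩]
  | choiceL x α β φ Γ Δ =>
      [⟨insert (SeqElem.lab x (PDLFormula.box α φ)) (insert (SeqElem.lab x (PDLFormula.box β φ)) Γ), Δ⟩]
  | choiceR x α β φ Γ Δ =>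
      [⟨Γ, insert (SeqElem.lab x (PDLFormula.box α φ)) Δ⟩, ⟨Γ, insert (SeqElem.lab x (PDLFormula.box β φ)) Δ⟩]
  | testL x φ ψ Γ Δ => [⟨Γ, insert (SeqElem.lab x φ) Δ⟩, ⟨insert (SeqElem.lab x ψ) Γ, Δ⟩]
  | testR x φ ψ Γ Δ => [⟨insert (SeqElem.lab x φ) Γ, insert (SeqElem.lab x ψ) Δ⟩]
  | starL x α φ Γ Δ =>
      [⟨insert (SeqElem.lab x φ)
          (insert (SeqElem.lab x (PDLFormula.box α (PDLFormula.box (PDLProgram.star α) φ))) Γ), Δ⟩]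
  | starR x α φ Γ Δ =>
      [⟨Γ, insert (SeqElem.lab x φ) Δ⟩,
       ⟨Γ, insert (SeqElem.lab x (PDLFormula.box α (PDLFormula.box (PDLProgram.star α) φ))) Δ⟩]
  | subst _ _ Γ Δ => [⟨Γ, Δ⟩]
  | cut A Γ Δ Γ₂ Δ₂ => [⟨Γ, insert A Δ⟩, ⟨insert A Γ₂, Δ₂⟩]

/-- Side conditions: the fresh-label condition of (□R). -/
def wf : RuleApp → Prop
  | boxR x _ y _ Γ Δ => y ∉ labs Γ ∧ y ∉ labs Δ ∧ y ≠ x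
  | _ => True

/-- `(τ, τ')` is a trace pair for (conclusion, `i`-th premise) of the rule application. -/
def tracePair : RuleApp → ℕ → TraceValue → TraceValue → Prop
  | ax _, _, _, _ => False
  | botL _, _, _, _ => False
  | wl _ _ Δ, i, τ, τ' => i = 0 ∧ τ.toElem ∈ Δ ∧ τ' = τ
  | wr _ _ Δ, i, τ, τ' => i = 0 ∧ τ.toElem ∈ Δ ∧ τ' = τ
  | andL _ _ _ _ Δ, i, τ, τ' => i = 0 ∧ τ.toElem ∈ Δ ∧ τ' = τ
  | andR _ _ _ _ Δ, i, τ, τ' => i < 2 ∧ τ.toElem ∈ Δ ∧ τ' = τ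
  | orL _ _ _ _ Δ, i, τ, τ' => i < 2 ∧ τ.toElem ∈ Δ ∧ τ' = τ
  | orR _ _ _ _ Δ, i, τ, τ' => i = 0 ∧ τ.toElem ∈ Δ ∧ τ' = τ
  | impL _ _ _ _ Δ, i, τ, τ' => i < 2 ∧ τ.toElem ∈ Δ ∧ τ' = τ
  | impR _ _ _ _ Δ, i, τ, τ' => i = 0 ∧ τ.toElem ∈ Δ ∧ τ' = τ
  | boxL _ _ _ _ _ Δ, i, τ, τ' => i = 0 ∧ τ.toElem ∈ Δ ∧ τ' = τ
  | boxR x a y φ _ Δ, i, τ, τ' => i = 0 ∧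
      ((τ.toElem ∈ Δ ∧ τ' = τ) ∨
       (τ'.toElem = SeqElem.lab y φ ∧
        τ = ⟨x, PDLProgram.atom a :: τ'.spine, τ'.focus, τ'.formula⟩))
  | compL _ _ _ _ _ Δ, i, τ, τ' => i = 0 ∧ τ.toElem ∈ Δ ∧ τ' = τ
  | compR x α β φ _ Δ, i, τ, τ' => i = 0 ∧
      ((τ.toElem ∈ Δ ∧ τ' = τ) ∨
       (∃ σ : TraceValue, σ.toElem = SeqElem.lab x φ ∧
          τ = σ.push (PDLProgram.comp α β) ∧ τ' = (σ.push β).push α))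
  | choiceL _ _ _ _ _ Δ, i, τ, τ' => i = 0 ∧ τ.toElem ∈ Δ ∧ τ' = τ
  | choiceR x α β φ _ Δ, i, τ, τ' => i < 2 ∧
      ((τ.toElem ∈ Δ ∧ τ' = τ) ∨
       (∃ σ : TraceValue, σ.toElem = SeqElem.lab x φ ∧
          τ = σ.push (PDLProgram.choice α β) ∧ τ' = σ.push (if i = 0 then α else β)))
  | testL _ _ _ _ Δ, i, τ, τ' => i < 2 ∧ τ.toElem ∈ Δ ∧ τ' = τ
  | testR x φ ψ _ Δ, i, τ, τ' => i = 0 ∧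
      ((τ.toElem ∈ Δ ∧ τ' = τ) ∨
       (τ'.toElem = SeqElem.lab x ψ ∧ τ = τ'.push (PDLProgram.test φ)))
  | starL _ _ _ _ Δ, i, τ, τ' => i = 0 ∧ τ.toElem ∈ Δ ∧ τ' = τ
  | starR x α φ _ Δ, i, τ, τ' =>
      (i = 0 ∧ ((τ.toElem ∈ Δ ∧ τ' = τ) ∨
         (τ'.toElem = SeqElem.lab x φ ∧ τ = τ'.push (PDLProgram.star α)))) ∨
      (i = 1 ∧ ((τ.toElem ∈ Δ ∧ τ' = τ) ∨
         (τ.toElem = SeqElem.lab x (PDLFormula.box (PDLProgram.star α) φ) ∧ τ' = τ.push α)))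
  | subst x y _ Δ, i, τ, τ' => i = 0 ∧ τ'.toElem ∈ Δ ∧
      τ = ⟨substLabel x y τ'.label, τ'.spine, τ'.focus, τ'.formula⟩
  | cut _ _ Δ _ Δ₂, i, τ, τ' =>
      (i = 0 ∧ τ.toElem ∈ Δ ∧ τ' = τ) ∨ (i = 1 ∧ τ.toElem ∈ Δ₂ ∧ τ' = τ)

/-- Progressing trace pairs: the principal formula of a (∗R) right premise with empty spine. -/
def progressing : RuleApp → ℕ → TraceValue → TraceValue → Prop
  | starR x α φ _ _, i, τ, τ' => i = 1 ∧ τ = ⟨x, [], α, φ⟩ ∧ τ' = τ.push α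
  | _, _, _, _ => False

/-! #### Classification of rule applications -/

def isCut : RuleApp → Prop | cut _ _ _ _ _ => True | _ => False
def isSubst : RuleApp → Prop | subst _ _ _ _ => True | _ => False
def isWeak : RuleApp → Prop | wl _ _ _ => True | wr _ _ _ => True | _ => False

/-- Rules allowed when closing a leaf: weakenings, (Ax) and (⊥). -/
def isClosing : RuleApp → Prop
  | wl _ _ _ => True | wr _ _ _ => True | ax _ => True | botL _ => True | _ => False

/-- The logical rules: all rules except weakening, (Subst) and (Cut). -/
def isLogical : RuleApp → Prop
  | wl _ _ _ => False | wr _ _ _ => False | subst _ _ _ _ => False | cut _ _ _ _ _ => False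
  | _ => True

/-- The left logical rules. -/
def isLeftLogical : RuleApp → Prop
  | andL _ _ _ _ _ => True | orL _ _ _ _ _ => True | impL _ _ _ _ _ => True
  | boxL _ _ _ _ _ _ => True | compL _ _ _ _ _ _ => True | choiceL _ _ _ _ _ _ => True
  | testL _ _ _ _ _ => True | starL _ _ _ _ _ => True
  | _ => False

/-- The rule instance consumes its principal labelled formula (it does not also occur in the
context), and (for □L) preserves the relational atom. -/
def consumes : RuleApp → Prop
  | andL x φ ψ Γ _ => SeqElem.lab x (PDLFormula.and φ ψ) ∉ Γ
  | andR x φ ψ _ Δ => SeqElem.lab x (PDLFormula.and φ ψ) ∉ Δ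
  | orL x φ ψ Γ _ => SeqElem.lab x (PDLFormula.or φ ψ) ∉ Γ
  | orR x φ ψ _ Δ => SeqElem.lab x (PDLFormula.or φ ψ) ∉ Δ
  | impL x φ ψ Γ _ => SeqElem.lab x (PDLFormula.imp φ ψ) ∉ Γ
  | impR x φ ψ _ Δ => SeqElem.lab x (PDLFormula.imp φ ψ) ∉ Δ
  | boxL x a y φ Γ _ =>
      SeqElem.lab x (PDLFormula.box (PDLProgram.atom a) φ) ∉ Γ ∧ SeqElem.rel x a y ∈ Γ
  | boxR x a _ φ _ Δ => SeqElem.lab x (PDLFormula.box (PDLProgram.atom a) φ) ∉ Δ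
  | compL x α β φ Γ _ => SeqElem.lab x (PDLFormula.box (PDLProgram.comp α β) φ) ∉ Γ
  | compR x α β φ _ Δ => SeqElem.lab x (PDLFormula.box (PDLProgram.comp α β) φ) ∉ Δ
  | choiceL x α β φ Γ _ => SeqElem.lab x (PDLFormula.box (PDLProgram.choice α β) φ) ∉ Γ
  | choiceR x α β φ _ Δ => SeqElem.lab x (PDLFormula.box (PDLProgram.choice α β) φ) ∉ Δ
  | testL x φ ψ Γ _ => SeqElem.lab x (PDLFormula.box (PDLProgram.test φ) ψ) ∉ Γ
  | testR x φ ψ _ Δ => SeqElem.lab x (PDLFormula.box (PDLProgram.test φ) ψ) ∉ Δ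
  | starL x α φ Γ _ => SeqElem.lab x (PDLFormula.box (PDLProgram.star α) φ) ∉ Γ
  | starR x α φ _ Δ => SeqElem.lab x (PDLFormula.box (PDLProgram.star α) φ) ∉ Δ
  | _ => True

/-- `B` (in the antecedent of the `i`-th premise) is an immediate ancestor of `A`
(in the antecedent of the conclusion). -/
def antAncestor : RuleApp → ℕ → SeqElem → SeqElem → Prop
  | ax _, _, _, _ => False
  | botL _, _, _, _ => False
  | wl _ Γ _, i, A, B => i = 0 ∧ A ∈ Γ ∧ B = A
  | wr _ Γ _, i, A, B => i = 0 ∧ A ∈ Γ ∧ B = A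
  | andL x φ ψ Γ _, i, A, B => i = 0 ∧
      ((A ∈ Γ ∧ B = A) ∨
       (A = SeqElem.lab x (PDLFormula.and φ ψ) ∧ (B = SeqElem.lab x φ ∨ B = SeqElem.lab x ψ)))
  | andR _ _ _ Γ _, i, A, B => i < 2 ∧ A ∈ Γ ∧ B = A
  | orL x φ ψ Γ _, i, A, B => i < 2 ∧
      ((A ∈ Γ ∧ B = A) ∨
       (A = SeqElem.lab x (PDLFormula.or φ ψ) ∧ B = SeqElem.lab x (if i = 0 then φ else ψ)))
  | orR _ _ _ Γ _, i, A, B => i = 0 ∧ A ∈ Γ ∧ B = A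
  | impL x φ ψ Γ _, i, A, B =>
      (i = 0 ∧ A ∈ Γ ∧ B = A) ∨
      (i = 1 ∧ ((A ∈ Γ ∧ B = A) ∨
        (A = SeqElem.lab x (PDLFormula.imp φ ψ) ∧ B = SeqElem.lab x ψ)))
  | impR _ _ _ Γ _, i, A, B => i = 0 ∧ A ∈ Γ ∧ B = A
  | boxL x a y φ Γ _, i, A, B => i = 0 ∧
      ((A ∈ Γ ∧ B = A) ∨
       (A = SeqElem.lab x (PDLFormula.box (PDLProgram.atom a) φ) ∧ B = SeqElem.lab y φ))
  | boxR _ _ _ _ Γ _, i, A, B => i = 0 ∧ A ∈ Γ ∧ B = A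
  | compL x α β φ Γ _, i, A, B => i = 0 ∧
      ((A ∈ Γ ∧ B = A) ∨
       (A = SeqElem.lab x (PDLFormula.box (PDLProgram.comp α β) φ) ∧
        B = SeqElem.lab x (PDLFormula.box α (PDLFormula.box β φ))))
  | compR _ _ _ _ Γ _, i, A, B => i = 0 ∧ A ∈ Γ ∧ B = A
  | choiceL x α β φ Γ _, i, A, B => i = 0 ∧
      ((A ∈ Γ ∧ B = A) ∨
       (A = SeqElem.lab x (PDLFormula.box (PDLProgram.choice α β) φ) ∧
        (B = SeqElem.lab x (PDLFormula.box α φ) ∨ B = SeqElem.lab x (PDLFormula.box β φ))))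
  | choiceR _ _ _ _ Γ _, i, A, B => i < 2 ∧ A ∈ Γ ∧ B = A
  | testL x φ ψ Γ _, i, A, B =>
      (i = 0 ∧ A ∈ Γ ∧ B = A) ∨
      (i = 1 ∧ ((A ∈ Γ ∧ B = A) ∨
        (A = SeqElem.lab x (PDLFormula.box (PDLProgram.test φ) ψ) ∧ B = SeqElem.lab x ψ)))
  | testR _ _ _ Γ _, i, A, B => i = 0 ∧ A ∈ Γ ∧ B = A
  | starL x α φ Γ _, i, A, B => i = 0 ∧
      ((A ∈ Γ ∧ B = A) ∨
       (A = SeqElem.lab x (PDLFormula.box (PDLProgram.star α) φ) ∧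
        (B = SeqElem.lab x φ ∨
         B = SeqElem.lab x (PDLFormula.box α (PDLFormula.box (PDLProgram.star α) φ)))))
  | starR _ _ _ Γ _, i, A, B => i < 2 ∧ A ∈ Γ ∧ B = A
  | subst x y Γ _, i, A, B => i = 0 ∧ B ∈ Γ ∧ A = B.subst x y
  | cut _ Γ _ Γ₂ _, i, A, B =>
      (i = 0 ∧ A ∈ Γ ∧ B = A) ∨ (i = 1 ∧ A ∈ Γ₂ ∧ B = A)

/-- `B` (in the consequent of the `i`-th premise) is an immediate ancestor of `A`
(in the consequent of the conclusion). -/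
def sucAncestor : RuleApp → ℕ → SeqElem → SeqElem → Prop
  | ax _, _, _, _ => False
  | botL _, _, _, _ => False
  | wl _ _ Δ, i, A, B => i = 0 ∧ A ∈ Δ ∧ B = A
  | wr _ _ Δ, i, A, B => i = 0 ∧ A ∈ Δ ∧ B = A
  | andL _ _ _ _ Δ, i, A, B => i = 0 ∧ A ∈ Δ ∧ B = A
  | andR x φ ψ _ Δ, i, A, B => i < 2 ∧
      ((A ∈ Δ ∧ B = A) ∨
       (A = SeqElem.lab x (PDLFormula.and φ ψ) ∧ B = SeqElem.lab x (if i = 0 then φ else ψ)))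
  | orL _ _ _ _ Δ, i, A, B => i < 2 ∧ A ∈ Δ ∧ B = A
  | orR x φ ψ _ Δ, i, A, B => i = 0 ∧
      ((A ∈ Δ ∧ B = A) ∨
       (A = SeqElem.lab x (PDLFormula.or φ ψ) ∧ (B = SeqElem.lab x φ ∨ B = SeqElem.lab x ψ)))
  | impL _ _ _ _ Δ, i, A, B => i < 2 ∧ A ∈ Δ ∧ B = A
  | impR x φ ψ _ Δ, i, A, B => i = 0 ∧
      ((A ∈ Δ ∧ B = A) ∨ (A = SeqElem.lab x (PDLFormula.imp φ ψ) ∧ B = SeqElem.lab x ψ))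
  | boxL _ _ _ _ _ Δ, i, A, B => i = 0 ∧ A ∈ Δ ∧ B = A
  | boxR x a y φ _ Δ, i, A, B => i = 0 ∧
      ((A ∈ Δ ∧ B = A) ∨
       (A = SeqElem.lab x (PDLFormula.box (PDLProgram.atom a) φ) ∧ B = SeqElem.lab y φ))
  | compL _ _ _ _ _ Δ, i, A, B => i = 0 ∧ A ∈ Δ ∧ B = A
  | compR x α β φ _ Δ, i, A, B => i = 0 ∧
      ((A ∈ Δ ∧ B = A) ∨
       (A = SeqElem.lab x (PDLFormula.box (PDLProgram.comp α β) φ) ∧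
        B = SeqElem.lab x (PDLFormula.box α (PDLFormula.box β φ))))
  | choiceL _ _ _ _ _ Δ, i, A, B => i = 0 ∧ A ∈ Δ ∧ B = A
  | choiceR x α β φ _ Δ, i, A, B => i < 2 ∧
      ((A ∈ Δ ∧ B = A) ∨
       (A = SeqElem.lab x (PDLFormula.box (PDLProgram.choice α β) φ) ∧
        B = SeqElem.lab x (PDLFormula.box (if i = 0 then α else β) φ)))
  | testL _ _ _ _ Δ, i, A, B => i < 2 ∧ A ∈ Δ ∧ B = A
  | testR x φ ψ _ Δ, i, A, B => i = 0 ∧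
      ((A ∈ Δ ∧ B = A) ∨
       (A = SeqElem.lab x (PDLFormula.box (PDLProgram.test φ) ψ) ∧ B = SeqElem.lab x ψ))
  | starL _ _ _ _ Δ, i, A, B => i = 0 ∧ A ∈ Δ ∧ B = A
  | starR x α φ _ Δ, i, A, B => i < 2 ∧
      ((A ∈ Δ ∧ B = A) ∨
       (A = SeqElem.lab x (PDLFormula.box (PDLProgram.star α) φ) ∧
        B = SeqElem.lab x (if i = 0 then φ
              else PDLFormula.box α (PDLFormula.box (PDLProgram.star α) φ))))
  | subst x y _ Δ, i, A, B => i = 0 ∧ B ∈ Δ ∧ A = B.subst x y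
  | cut _ _ Δ _ Δ₂, i, A, B =>
      (i = 0 ∧ A ∈ Δ ∧ B = A) ∨ (i = 1 ∧ A ∈ Δ₂ ∧ B = A)

end RuleApp
/-! ### Derivations: possibly infinite trees of rule applications, with open leaves -/

/-- A node of a derivation: either a rule application, or an open leaf with its sequent. -/
abbrev DNode := Sum RuleApp Sequent

def DNode.concl : DNode → Sequent := Sum.elim RuleApp.conc id

/-- A (possibly infinite, possibly open) derivation, presented as an assignment of nodes to
the addresses (lists of child indices) of an infinitely-branching tree. -/
structure Deriv where
  node : List ℕ → Option DNode
  wf_rule : ∀ p r, node p = some (Sum.inl r) → r.wf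
  children : ∀ p r, node p = some (Sum.inl r) →
      ∀ i, (node (p ++ [i])).map DNode.concl = r.prems[i]?
  leaf_no_children : ∀ p S, node p = some (Sum.inr S) → ∀ i, node (p ++ [i]) = none
  tree_closed : ∀ p i, node p = none → node (p ++ [i]) = none

namespace Deriv

def ruleAt (D : Deriv) (p : List ℕ) : Option RuleApp :=
  match D.node p with
  | some (Sum.inl r) => some r
  | _ => none

def openAt (D : Deriv) (p : List ℕ) : Option Sequent :=
  match D.node p with
  | some (Sum.inr S) => some S
  | _ => none

def seqAt (D : Deriv) (p : List ℕ) : Option Sequent := (D.node p).map DNode.concl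

def Finite (D : Deriv) : Prop := { p | (D.node p).isSome }.Finite

def NoOpen (D : Deriv) : Prop := ∀ p S, D.node p ≠ some (Sum.inr S)

end Deriv

/-! ### Infinite paths, traces and the global trace condition -/

/-- The address of the `n`-th node on the infinite branch determined by the sequence `f` of
child indices. -/
def pathAddr (f : ℕ → ℕ) (n : ℕ) : List ℕ := (List.range n).map f

/-- `f` determines an infinite path in the derivation tree whose rules are given by `R`. -/
def IsInfPath (R : List ℕ → Option RuleApp) (f : ℕ → ℕ) : Prop :=
  ∀ n, (R (pathAddr f n)).isSome

/-- The infinite path determined by `f` is followed (from some point `N` on) by an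
infinitely progressing trace. -/
def FollowedByProgTrace (R : List ℕ → Option RuleApp) (f : ℕ → ℕ) : Prop :=
  ∃ (N : ℕ) (g : ℕ → TraceValue),
    (∀ k, ∃ r, R (pathAddr f (N + k)) = some r ∧
        RuleApp.tracePair r (f (N + k)) (g k) (g (k + 1))) ∧
    (∀ m, ∃ k, m ≤ k ∧ ∃ r, R (pathAddr f (N + k)) = some r ∧
        RuleApp.progressing r (f (N + k)) (g k) (g (k + 1)))

/-- The global trace condition. -/
def GTC (R : List ℕ → Option RuleApp) : Prop :=
  ∀ f, IsInfPath R f → FollowedByProgTrace R f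

/-- A `G3PDL∞` proof of `S`: a pre-proof (derivation without open leaves) whose root sequent is
`S` and which satisfies the global trace condition. -/
def Deriv.IsProofOf (D : Deriv) (S : Sequent) : Prop :=
  D.seqAt [] = some S ∧ D.NoOpen ∧ GTC D.ruleAt

/-! ### Finite traces along finite paths in a derivation -/

/-- `tr` is a trace covering the path from the node at address `base` to the node at address
`base ++ tail`. -/
def CoversFrom (D : Deriv) (base tail : List ℕ) (tr : List TraceValue) : Prop :=
  tr.length = tail.length + 1 ∧
  ∀ i r j τ τ', D.ruleAt (base ++ tail.take i) = some r → tail[i]? = some j →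
    tr[i]? = some τ → tr[i + 1]? = some τ' → RuleApp.tracePair r j τ τ'

/-- The trace `tr` covering the path from `base` along `tail` progresses at position `i`. -/
def ProgAtFrom (D : Deriv) (base tail : List ℕ) (tr : List TraceValue) (i : ℕ) : Prop :=
  ∃ r j τ τ', D.ruleAt (base ++ tail.take i) = some r ∧ tail[i]? = some j ∧
    tr[i]? = some τ ∧ tr[i + 1]? = some τ' ∧ RuleApp.progressing r j τ τ'

/-! ### Cyclic derivations and their unfoldings -/

/-- Dereference an address: at an ordinary node stay put, at a bud jump to its companion. -/
def Deriv.deref (D : Deriv) (c : List ℕ → Option (List ℕ)) (p : List ℕ) : Option (List ℕ) :=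
  match D.node p with
  | some (Sum.inl _) => some p
  | some (Sum.inr _) => c p
  | none => none

/-- The address (in the finite tree) of the node corresponding to the address `p` of the
infinite unfolding. -/
def Deriv.unfoldAddr (D : Deriv) (c : List ℕ → Option (List ℕ)) (p : List ℕ) :
    Option (List ℕ) :=
  p.foldl (fun q i => q.bind fun q' => D.deref c (q' ++ [i])) (D.deref c [])

/-- The rule applied at address `p` of the infinite unfolding of the cyclic derivation. -/
def Deriv.unfoldRule (D : Deriv) (c : List ℕ → Option (List ℕ)) (p : List ℕ) :
    Option RuleApp :=
  (D.unfoldAddr c p).bind fun q => D.ruleAt q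

/-- Each bud assigned a companion must be assigned an internal node carrying a syntactically
identical sequent. -/
def CompanionCond (D : Deriv) (c : List ℕ → Option (List ℕ)) : Prop :=
  ∀ p S, D.node p = some (Sum.inr S) →
    ∀ q, c p = some q → ∃ r, D.node q = some (Sum.inl r) ∧ RuleApp.conc r = S

/-- Every bud is assigned a companion. -/
def FullCompanion (D : Deriv) (c : List ℕ → Option (List ℕ)) : Prop :=
  ∀ p S, D.node p = some (Sum.inr S) → ∃ q, c p = some q

/-- `S` is derivable in the cyclic system `G3PDLω`: there is a finite derivation tree, with each
bud assigned a companion, whose infinite unfolding satisfies the global trace condition. -/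
def CyclicDerivable (S : Sequent) : Prop :=
  ∃ (D : Deriv) (c : List ℕ → Option (List ℕ)),
    D.seqAt [] = some S ∧ D.Finite ∧ CompanionCond D c ∧ FullCompanion D c ∧
    GTC (D.unfoldRule c)

/-! Read upwards, a logical rule only adds labelled formulas to the antecedent (or, for (□L),
drops an atom), except (□R), which adds one atom `x →a y` with `y` fresh. A fresh `y` has no
successor, so any path through the new atom ends at `y` and cannot close a cycle. -/

lemma relStep_insert_lab (x : Label) (φ : PDLFormula) (Γ : Finset SeqElem) :
    relStep (insert (SeqElem.lab x φ) Γ) = relStep Γ := by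
  ext u v
  simp [relStep]

lemma relStep_insert_rel {x : Label} {a : ℕ} {y u v : Label} {Γ : Finset SeqElem} :
    relStep (insert (SeqElem.rel x a y) Γ) u v ↔ (u = x ∧ v = y) ∨ relStep Γ u v := by
  simp [relStep, exists_or, and_comm]

lemma not_relStep_of_not_mem_labs {Γ : Finset SeqElem} {y : Label} (hy : y ∉ labs Γ)
    (v : Label) : ¬ relStep Γ y v := by
  rintro ⟨b, hb⟩
  exact hy (Finset.mem_biUnion.2 ⟨_, hb, by simp [SeqElem.labels]⟩)

lemma relStep_mono {Γ Γ' : Finset SeqElem} (hsub : Γ ⊆ Γ') : relStep Γ ≤ relStep Γ' :=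
  fun _ _ ⟨a, ha⟩ => ⟨a, hsub ha⟩

lemma RelAcyclic.anti {Γ Γ' : Finset SeqElem} (h : RelAcyclic Γ') (hsub : Γ ⊆ Γ') :
    RelAcyclic Γ := fun x hx =>
  h x (Relation.TransGen.mono (relStep_mono hsub) x x hx)

@[simp]
lemma relAcyclic_insert_lab (x : Label) (φ : PDLFormula) (Γ : Finset SeqElem) :
    RelAcyclic (insert (SeqElem.lab x φ) Γ) ↔ RelAcyclic Γ := by
  simp only [RelAcyclic, relStep_insert_lab]

lemma transGen_insert_fresh {Γ : Finset SeqElem} {x : Label} {a : ℕ} {y z w : Label}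
    (hy : y ∉ labs Γ) (h : Relation.TransGen (relStep (insert (SeqElem.rel x a y) Γ)) z w) :
    Relation.TransGen (relStep Γ) z w ∨ w = y := by
  induction h with
  | single hstep =>
    rcases relStep_insert_rel.1 hstep with ⟨-, rfl⟩ | hstep
    · exact Or.inr rfl
    · exact Or.inl (.single hstep)
  | tail _ hstep ih =>
    rcases relStep_insert_rel.1 hstep with ⟨-, rfl⟩ | hΓ
    · exact Or.inr rfl
    · rcases ih with ih | rfl
      · exact Or.inl (ih.tail hΓ)
      · exact absurd hΓ (not_relStep_of_not_mem_labs hy _)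

lemma RelAcyclic.insert_rel_of_fresh {Γ : Finset SeqElem} {x : Label} {a : ℕ} {y : Label}
    (h : RelAcyclic Γ) (hy : y ∉ labs Γ) (hyx : y ≠ x) :
    RelAcyclic (insert (SeqElem.rel x a y) Γ) := by
  intro z hz
  rcases transGen_insert_fresh hy hz with hcycle | rfl
  · exact h z hcycle
  · obtain ⟨v, hstep, -⟩ := Relation.TransGen.head'_iff.1 hz
    rcases relStep_insert_rel.1 hstep with ⟨rfl, -⟩ | hstep
    · exact hyx rfl
    · exact not_relStep_of_not_mem_labs hy v hstep

lemma RuleApp.acyclic_of_mem_prems {r : RuleApp} (hlog : r.isLogical) (hwf : r.wf)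
    (hc : r.conc.Acyclic) : ∀ S ∈ r.prems, S.Acyclic := by
  cases r <;> simp only [isLogical] at hlog <;>
    simp only [prems, conc, Sequent.Acyclic, relAcyclic_insert_lab, List.mem_cons,
      List.not_mem_nil, or_false, forall_eq_or_imp, forall_eq, and_self, IsEmpty.forall_iff,
      implies_true] at hc ⊢
  case boxL => exact hc.anti (Finset.subset_insert _ _)
  case boxR => exact hc.insert_rel_of_fresh hwf.1 hwf.2.2
  all_goals exact hc

lemma Deriv.exists_mem_prems_of_seqAt_append {D : Deriv} {q : List ℕ} {i : ℕ} {S : Sequent}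
    (hS : D.seqAt (q ++ [i]) = some S) :
    ∃ r, D.node q = some (Sum.inl r) ∧ S ∈ r.prems := by
  obtain ⟨d, hd, rfl⟩ := Option.map_eq_some_iff.1 hS
  match hq : D.node q with
  | none => simp [D.tree_closed q i hq] at hd
  | some (.inr S') => simp [D.leaf_no_children q S' hq i] at hd
  | some (.inl r) =>
    have hprem : r.prems[i]? = some d.concl := by rw [← D.children q r hq i, hd]; rfl
    exact ⟨r, rfl, List.mem_of_getElem? hprem⟩

lemma Deriv.forall_seqAt_of_root {D : Deriv} {P : Sequent → Prop}
    (hroot : ∀ S, D.seqAt [] = some S → P S)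
    (hstep : ∀ p r, D.node p = some (Sum.inl r) → P r.conc → ∀ S ∈ r.prems, P S) :
    ∀ p S, D.seqAt p = some S → P S := by
  intro p
  induction p using List.reverseRecOn with
  | nil => exact hroot
  | append_singleton q i ih =>
    intro S hS
    obtain ⟨r, hq, hS⟩ := D.exists_mem_prems_of_seqAt_append hS
    exact hstep q r hq (ih _ (by simp [seqAt, hq, DNode.concl])) S hS

/-- **Preservation of acyclicity**: if `D` is a finite derivation consisting only of logical
rules of `G3PDL∞` whose conclusion is an acyclic sequent, then every sequent appearing in `D`
is acyclic. -/
theorem acyclicity_preserved (D : Deriv) (hfin : D.Finite)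
    (hlog : ∀ p r, D.ruleAt p = some r → RuleApp.isLogical r)
    (S₀ : Sequent) (hroot : D.seqAt [] = some S₀) (hac : S₀.Acyclic) :
    ∀ p S, D.seqAt p = some S → S.Acyclic := by
  refine D.forall_seqAt_of_root (fun S hS => ?_) fun p r hp hc => ?_
  · rw [hroot, Option.some_inj] at hS
    exact hS ▸ hac
  · exact RuleApp.acyclic_of_mem_prems (hlog p r (by simp [Deriv.ruleAt, hp])) (D.wf_rule p r hp) hc
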